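/- Let d ≥ 1 and let (k_M) be positive naturals with k_M → ∞. Let R_M = ⌈(M/k_M)^{1/d}⌉^d and suppose R_M ≤ M and R_M·k_M ≤ M for all large M. Then (1/M)·ln( C(M+R_M, M)^d ) → 0 as M → ∞. -/

import Mathlib

open Filter Real Topology
open scoped Nat

/-! With `x = R / M`, the estimate `C(M + R, R) ≤ (e (M + R) / R) ^ R ≤ (2e / x) ^ R` (for `R ≤ M`)
gives `(1 / M) log C(M + R, M) ≤ x (1 + log 2) - x log x`, and the right-hand side is continuous
in `x` and vanishes at `0`. The constraint `R k ≤ M` with `k → ∞` forces `x → 0`. -/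

lemma pow_div_exp_le_factorial (n : ℕ) : ((n : ℝ) / exp 1) ^ n ≤ n ! := by
  have h := pow_div_factorial_le_exp (n : ℝ) n.cast_nonneg n
  rw [div_le_iff₀ (by positivity)] at h
  rw [div_pow, exp_one_pow, div_le_iff₀ (by positivity), mul_comm]
  exact h

lemma choose_le_exp_mul_div_pow (n r : ℕ) : (n.choose r : ℝ) ≤ (exp 1 * n / r) ^ r := by
  rcases Nat.eq_zero_or_pos r with rfl | hr
  · simp
  calc (n.choose r : ℝ) ≤ n ^ r / r ! := Nat.choose_le_pow_div r n
    _ ≤ n ^ r / ((r : ℝ) / exp 1) ^ r :=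
        div_le_div_of_nonneg_left (by positivity) (by positivity) (pow_div_exp_le_factorial r)
    _ = (exp 1 * n / r) ^ r := by
        rw [div_pow, div_pow, mul_pow]
        field_simp

lemma log_choose_add_div_le (M R : ℕ) (hRM : R ≤ M) :
    log ((M + R).choose R) / M ≤ (R / M) * (1 + log 2) + negMulLog (R / M) := by
  rcases Nat.eq_zero_or_pos R with rfl | hR
  · simp
  have hM : (0 : ℝ) < M := by exact_mod_cast hR.trans_le hRM
  have hR' : (0 : ℝ) < R := by exact_mod_cast hR
  have hRM' : (R : ℝ) ≤ M := by exact_mod_cast hRM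
  set x : ℝ := R / M with hx
  have hx0 : 0 < x := by positivity
  have hchoose : ((M + R).choose R : ℝ) ≤ (2 * exp 1 / x) ^ R := by
    refine (choose_le_exp_mul_div_pow _ _).trans (pow_le_pow_left₀ (by positivity) ?_ R)
    rw [hx, div_div_eq_mul_div]
    exact div_le_div_of_nonneg_right (by push_cast; nlinarith [exp_pos 1]) hR'.le
  have hpos : (0 : ℝ) < (M + R).choose R := by exact_mod_cast Nat.choose_pos (by omega)
  rw [div_le_iff₀' hM]
  calc log ((M + R).choose R) ≤ R * log (2 * exp 1 / x) := by
        simpa only [log_pow] using log_le_log hpos hchoose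
    _ = M * (x * (1 + log 2) + negMulLog x) := by
        rw [log_div (by positivity) hx0.ne', log_mul two_ne_zero (exp_pos 1).ne', log_exp,
          negMulLog, hx]
        field_simp
        ring

lemma tendsto_div_zero_of_mul_le (k R : ℕ → ℕ) (hk : Tendsto (fun M => (k M : ℝ)) atTop atTop)
    (hRk : ∀ᶠ M in atTop, R M * k M ≤ M) : Tendsto (fun M => (R M : ℝ) / M) atTop (𝓝 0) := by
  refine tendsto_of_tendsto_of_tendsto_of_le_of_le' tendsto_const_nhds hk.inv_tendsto_atTop
    (Eventually.of_forall fun M => by positivity) ?_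
  filter_upwards [hRk, hk.eventually_gt_atTop 0, eventually_gt_atTop 0] with M hM hkM hM0
  rw [Pi.inv_apply, div_le_iff₀ (by exact_mod_cast hM0), inv_mul_eq_div, le_div_iff₀ hkM]
  exact_mod_cast hM

theorem gessaman_condition_b_general (d : ℕ) (k : ℕ → ℕ)
    (hk : Tendsto (fun M => (k M : ℝ)) atTop atTop)
    (R : ℕ → ℕ)
    (hRM : ∀ᶠ M in atTop, R M ≤ M ∧ R M * k M ≤ M) :
    Tendsto (fun M : ℕ =>
        (1 / (M : ℝ)) * Real.log ((Nat.choose (M + R M) M : ℝ) ^ d))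
      atTop (nhds 0) := by
  have hx := tendsto_div_zero_of_mul_le k R hk (hRM.mono fun _ h => h.2)
  have hbound : Tendsto (fun M => d * ((R M / M : ℝ) * (1 + log 2) + negMulLog (R M / M)))
      atTop (𝓝 0) := by
    have hcont : Continuous fun x : ℝ => d * (x * (1 + log 2) + negMulLog x) := by fun_prop
    simpa [Function.comp_def] using (hcont.tendsto 0).comp hx
  refine tendsto_of_tendsto_of_tendsto_of_le_of_le' tendsto_const_nhds hbound
    (Eventually.of_forall fun M => ?_) ?_
  · have hC : (1 : ℝ) ≤ (M + R M).choose M := by exact_mod_cast Nat.choose_pos (by omega)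
    exact mul_nonneg (by positivity) (log_nonneg (one_le_pow₀ hC))
  · filter_upwards [hRM] with M hM
    rw [log_pow, Nat.choose_symm_add, one_div_mul_eq_div, mul_div_assoc]
    exact mul_le_mul_of_nonneg_left (log_choose_add_div_le M (R M) hM.1) d.cast_nonneg

theorem gessaman_condition_b (d : ℕ) (hd : 1 ≤ d) (k : ℕ → ℕ)
    (hkpos : ∀ M, 0 < k M)
    (hk : Tendsto (fun M => (k M : ℝ)) atTop atTop)
    (R : ℕ → ℕ)
    (hR : ∀ M, R M = (⌈((M : ℝ) / (k M)) ^ ((1 : ℝ) / d)⌉₊) ^ d)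
    (hRM : ∀ᶠ M in atTop, R M ≤ M ∧ R M * k M ≤ M) :
    Tendsto (fun M : ℕ =>
        (1 / (M : ℝ)) * Real.log ((Nat.choose (M + R M) M : ℝ) ^ d))
      atTop (nhds 0) :=
  gessaman_condition_b_general d k hk R hRM
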